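/- arXiv:2308.13925 — 2 statements merged into one kernel-verified Lean document; each statement's English description precedes it below -/
import Mathlib

section
/- Let f : ℂ^{n+1} → ℂ be a polynomial function and let k be a positive integer. Set X_k = {(w,z) ∈ ℂ × ℂ^{n+1} : w^k · f(z) = 1} and X_1 = {(w,z) ∈ ℂ × ℂ^{n+1} : w · f(z) = 1}, each with the subspace topology. Then the map p : X_k → X_1 given by p(w,z) = (w^k, z) is a covering map, and every fiber of p has exactly k elements. -/
/-!
Send `(w, z) ∈ X_1` to `w ∈ ℂˣ`. Then `X_k` is the fibre product of this map with the `k`-th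
power covering `ℂˣ → ℂˣ`, and `p` is the first projection of that fibre product; covering maps are
stable under pullback. The fibre over `(w, z)` is the set of `k`-th roots of `w ≠ 0`, which has
exactly `k` elements.
-/

open MvPolynomial

/-- The affine variety `V(w^k · f - 1) ⊂ ℂ × ℂ^{n+1}`, with the subspace topology. -/
def Xf (n : ℕ) (f : MvPolynomial (Fin (n + 1)) ℂ) (k : ℕ) : Type _ :=
  {p : ℂ × (Fin (n + 1) → ℂ) // p.1 ^ k * MvPolynomial.eval p.2 f = 1}

noncomputable instance (n : ℕ) (f : MvPolynomial (Fin (n + 1)) ℂ) (k : ℕ) :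
    TopologicalSpace (Xf n f k) :=
  instTopologicalSpaceSubtype

/-- The map `X_k → X_1`, `(w, z) ↦ (w^k, z)`. -/
def coverProj (n : ℕ) (f : MvPolynomial (Fin (n + 1)) ℂ) (k : ℕ) :
    Xf n f k → Xf n f 1 :=
  fun q => ⟨(q.1.1 ^ k, q.1.2), by
    have h := q.2
    simpa [pow_one] using h⟩

section Pullback

variable {E X Y : Type*} [TopologicalSpace E] [TopologicalSpace X] [TopologicalSpace Y]
  {p : E → X} {g : Y → X}

theorem IsEvenlyCovered.pullback_fst (hg : Continuous g) {y : Y} {I : Type*} [TopologicalSpace I]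
    (h : IsEvenlyCovered p (g y) I) :
    IsEvenlyCovered (Function.Pullback.fst : g.Pullback p → Y) y I := by
  obtain ⟨hI, U, hyU, hU, hpU, H, hH⟩ := h
  have hcont : Continuous (Function.Pullback.fst : g.Pullback p → Y) :=
    continuous_fst.comp continuous_subtype_val
  have hmem (q : g.Pullback p) (hq : g q.1.1 ∈ U) : p q.1.2 ∈ U := q.2 ▸ hq
  refine ⟨hI, g ⁻¹' U, hyU, hU.preimage hg, (hU.preimage hg).preimage hcont,
    { toFun q := (⟨q.1.1.1, q.2⟩, (H ⟨q.1.1.2, hmem q.1 q.2⟩).2)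
      invFun yi := ⟨⟨(yi.1.1, H.symm (⟨g yi.1.1, yi.1.2⟩, yi.2)), by simp [← hH]⟩, yi.1.2⟩
      left_inv := by
        rintro ⟨⟨⟨y, e⟩, hye⟩, hy⟩
        have hHe : (⟨g y, hy⟩, (H ⟨e, hmem _ hy⟩).2) = H ⟨e, hmem _ hy⟩ :=
          Prod.ext (Subtype.ext (hye.trans (hH ⟨e, hmem _ hy⟩).symm)) rfl
        simp only [hHe, Homeomorph.symm_apply_apply]
      right_inv := by
        rintro ⟨y, i⟩
        simp
      continuous_toFun := by fun_prop
      continuous_invFun := by fun_prop }, fun _ => rfl⟩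

theorem IsCoveringMap.pullback_fst (hp : IsCoveringMap p) (hg : Continuous g) :
    IsCoveringMap (Function.Pullback.fst : g.Pullback p → Y) := fun y =>
  ((hp (g y)).pullback_fst hg).to_isEvenlyCovered_preimage

end Pullback

theorem Complex.natCard_pow_eq {k : ℕ} (hk : k ≠ 0) {a : ℂ} (ha : a ≠ 0) :
    Nat.card {v : ℂ // v ^ k = a} = k := by
  have hζ := Complex.isPrimitiveRoot_exp k hk
  rw [Nat.card_congr (Equiv.subtypeEquivRight fun v => (Polynomial.mem_nthRootsFinset
      (Nat.pos_of_ne_zero hk) a).symm), Nat.card_eq_finsetCard, Polynomial.nthRootsFinset,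
    Multiset.toFinset_card_of_nodup (hζ.nthRoots_nodup ha), hζ.card_nthRoots,
    if_pos (IsAlgClosed.exists_pow_nat_eq a (Nat.pos_of_ne_zero hk))]

def powNeZero (k : ℕ) (w : {w : ℂ // w ≠ 0}) : {w : ℂ // w ≠ 0} :=
  ⟨w ^ k, pow_ne_zero k w.2⟩

theorem isCoveringMap_powNeZero {k : ℕ} (hk : k ≠ 0) : IsCoveringMap (powNeZero k) :=
  isCoveringMap_npow k (Nat.cast_ne_zero.mpr hk)

section CoverProj

variable {n : ℕ} {f : MvPolynomial (Fin (n + 1)) ℂ} {k : ℕ}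

@[fun_prop]
theorem continuous_coverProj : Continuous (coverProj n f k) := by
  unfold coverProj; fun_prop

namespace Xf

theorem fst_ne_zero (hk : k ≠ 0) (q : Xf n f k) : q.1.1 ≠ 0 := by
  intro h
  simpa [h, zero_pow hk] using q.2

def fstNeZero (x : Xf n f 1) : {w : ℂ // w ≠ 0} :=
  ⟨x.1.1, x.fst_ne_zero one_ne_zero⟩

theorem continuous_fstNeZero : Continuous (fstNeZero (n := n) (f := f)) := by
  unfold fstNeZero; fun_prop

/-- `coverProj n f k` is definitionally `Function.Pullback.fst` composed with this map. -/
def homeomorphPullback (hk : k ≠ 0) :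
    Xf n f k ≃ₜ (fstNeZero (n := n) (f := f)).Pullback (powNeZero k) where
  toFun q := ⟨(coverProj n f k q, ⟨q.1.1, q.fst_ne_zero hk⟩), rfl⟩
  invFun r := ⟨(r.1.2.1, r.1.1.1.2), by
    have hw : r.1.1.1.1 = r.1.2.1 ^ k := congrArg Subtype.val r.2
    simpa [hw] using r.1.1.2⟩
  left_inv _ := rfl
  right_inv := by
    rintro ⟨⟨x, v⟩, hxv⟩
    have hw : x.1.1 = v.1 ^ k := congrArg Subtype.val hxv
    exact Subtype.ext (Prod.ext (Subtype.ext (Prod.ext hw.symm rfl)) rfl)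
  continuous_toFun := by fun_prop
  continuous_invFun := by fun_prop

end Xf

def coverProjFiberEquiv (x : Xf n f 1) :
    coverProj n f k ⁻¹' {x} ≃ {v : ℂ // v ^ k = x.1.1} where
  toFun q := ⟨q.1.1.1, congrArg (fun y : Xf n f 1 => y.1.1) q.2⟩
  invFun v := ⟨⟨(v.1, x.1.2), by simpa [v.2] using x.2⟩, Subtype.ext (Prod.ext v.2 rfl)⟩
  left_inv q :=
    Subtype.ext (Subtype.ext (Prod.ext rfl (congrArg (fun y : Xf n f 1 => y.1.2) q.2).symm))
  right_inv _ := rfl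

end CoverProj

/-- The map `(w,z) ↦ (w^k, z)` from `V(w^k f - 1)` to `V(w f - 1)` is a covering map
all of whose fibers have exactly `k` elements. -/
theorem coverProj_isCoveringMap (n : ℕ) (f : MvPolynomial (Fin (n + 1)) ℂ)
    (k : ℕ) (hk : 0 < k) :
    IsCoveringMap (coverProj n f k) ∧
    ∀ x : Xf n f 1, Nat.card ((coverProj n f k) ⁻¹' {x}) = k := by
  refine ⟨?_, fun x => ?_⟩
  · exact ((isCoveringMap_powNeZero hk.ne').pullback_fst Xf.continuous_fstNeZero).comp_homeomorph
      (Xf.homeomorphPullback hk.ne')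
  · rw [Nat.card_congr (coverProjFiberEquiv x),
      Complex.natCard_pow_eq hk.ne' (x.fst_ne_zero one_ne_zero)]
end

section
/- For all t, s ∈ ℂ with t³ ≠ 27 and s³ ≠ 27, the polynomials f_t = x³ + y³ + z³ − t·xyz and f_s = x³ + y³ + z³ − s·xyz have the same Milnor number at the origin: μ(f_t) = μ(f_s). In other words, (f_t)_{t³ ≠ 27} is a μ-constant family of isolated surface singularities. -/
/-! For `t³ ≠ 27` the Milnor algebra of `f_t` has dimension `8`, independently of `t`.
Modulo the partials `3x² − t·yz, 3y² − t·xz, 3z² − t·xy` one has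
`(27 − t³)·x²y = 9y·∂ₓf + 3tz·∂_yf + t²x·∂_zf`, so the Milnor ideal contains all six mixed cubics
`x²y, …` and hence every monomial of degree `4`; since every power series is a constant plus a
combination of the variables, the algebra is spanned by the eight squarefree monomials
`1, x, y, z, xy, yz, xz, xyz`. Eight linear functionals vanishing on the Milnor ideal and dual to
these monomials show that they are independent. -/

open MvPolynomial

/-- The Milnor ideal of a polynomial `f`. -/
noncomputable def milnorIdeal {N : ℕ} (f : MvPolynomial (Fin N) ℂ) :
    Ideal (MvPowerSeries (Fin N) ℂ) :=
  Ideal.span (Set.range fun i : Fin N =>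
    ((MvPolynomial.pderiv i f : MvPolynomial (Fin N) ℂ) : MvPowerSeries (Fin N) ℂ))

/-- The Milnor number of `f`. -/
noncomputable def milnorNumber {N : ℕ} (f : MvPolynomial (Fin N) ℂ) : ℕ :=
  Module.finrank ℂ (MvPowerSeries (Fin N) ℂ ⧸ milnorIdeal f)

/-- The cubic `x³ + y³ + z³ − t·xyz`. -/
noncomputable def fermatCubicFamily (t : ℂ) : MvPolynomial (Fin 3) ℂ :=
  MvPolynomial.X 0 ^ 3 + MvPolynomial.X 1 ^ 3 + MvPolynomial.X 2 ^ 3 -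
    MvPolynomial.C t * (MvPolynomial.X 0 * MvPolynomial.X 1 * MvPolynomial.X 2)
namespace MvPowerSeries

variable {σ R : Type*} [CommRing R]

theorem sub_C_constantCoeff_mem_span_X [Fintype σ] (φ : MvPowerSeries σ R) :
    φ - C (constantCoeff φ) ∈ Ideal.span (Set.range X) := by
  classical
  suffices key : ∀ s : Finset σ, ∀ φ : MvPowerSeries σ R,
      (∀ m, coeff m φ ≠ 0 → ∀ i ∉ s, m i = 0) →
        φ - C (constantCoeff φ) ∈ Ideal.span (Set.range X) from
    key Finset.univ φ fun _ _ i hi => absurd (Finset.mem_univ i) hi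
  intro s
  induction s using Finset.induction_on with
  | empty =>
    intro φ hφ
    suffices φ = C (constantCoeff φ) by rw [← this, sub_self]; exact zero_mem _
    ext m
    by_cases hm : m = 0
    · simp [hm]
    · rw [coeff_C, if_neg hm]
      by_contra h
      exact hm (Finsupp.ext fun i => hφ m h i (Finset.notMem_empty i))
  | insert a s ha ih =>
    intro φ hφ
    -- `χ` collects the terms of `φ` divisible by `X a`
    obtain ⟨χ, hχ⟩ : ∃ χ : MvPowerSeries σ R, ∀ m, coeff m χ = if m a = 0 then 0 else coeff m φ :=
      ⟨fun m => if m a = 0 then 0 else coeff m φ, fun _ => rfl⟩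
    have hχ_mem : χ ∈ Ideal.span (Set.range X) := by
      obtain ⟨ψ, rfl⟩ := X_dvd_iff.2 fun m (hm : m a = 0) => by rw [hχ, if_pos hm]
      exact Ideal.mul_mem_right _ _ (Ideal.subset_span ⟨a, rfl⟩)
    have hrest : ∀ m, coeff m (φ - χ) ≠ 0 → ∀ i ∉ s, m i = 0 := by
      intro m hm i hi
      rw [map_sub, hχ] at hm
      split_ifs at hm with hma
      · by_cases hia : i = a
        · rwa [hia]
        · exact hφ m (by simpa using hm) i (by simp [hia, hi])
      · exact absurd (sub_self _) hm
    have hc : constantCoeff (φ - χ) = constantCoeff φ := by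
      rw [← coeff_zero_eq_constantCoeff_apply, ← coeff_zero_eq_constantCoeff_apply, map_sub, hχ]
      simp
    have := add_mem (ih (φ - χ) hrest) hχ_mem
    rwa [hc, sub_right_comm, sub_add_cancel] at this

theorem eq_top_of_monomial_mem [Fintype σ] (S : Submodule R (MvPowerSeries σ R)) (n : ℕ)
    (hlow : ∀ d : σ →₀ ℕ, d.degree < n → monomial d 1 ∈ S)
    (hhigh : ∀ d : σ →₀ ℕ, d.degree = n → ∀ φ, monomial d 1 * φ ∈ S) : S = ⊤ := by
  classical
  suffices key : ∀ k, ∀ d : σ →₀ ℕ, d.degree + k = n → ∀ φ, monomial d 1 * φ ∈ S by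
    refine Submodule.eq_top_iff'.2 fun φ => ?_
    simpa using key n 0 (by simp) φ
  intro k
  induction k with
  | zero => exact fun d hd => hhigh d hd
  | succ k ih =>
    intro d hd φ
    obtain ⟨ψ, hψ⟩ := (Submodule.mem_span_range_iff_exists_fun _).1
      (sub_C_constantCoeff_mem_span_X φ)
    have hφ : φ = C (constantCoeff φ) + ∑ i, X i * ψ i := by
      rw [← sub_eq_iff_eq_add', ← hψ]; simp [smul_eq_mul, mul_comm]
    rw [hφ, mul_add, Finset.mul_sum]
    refine add_mem ?_ (Submodule.sum_mem _ fun i _ => ?_)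
    · rw [mul_comm, ← smul_eq_C_mul]
      exact S.smul_mem _ (hlow d (by omega))
    · rw [← mul_assoc, X, monomial_mul_monomial, mul_one]
      exact ih _ (by simp; omega) _

theorem monomial_one_mem_of_le {I : Ideal (MvPowerSeries σ R)} {d e : σ →₀ ℕ} (hed : e ≤ d)
    (he : monomial e 1 ∈ I) : monomial d 1 ∈ I := by
  rw [← add_tsub_cancel_of_le hed, ← mul_one (1 : R), ← monomial_mul_monomial]
  exact I.mul_mem_right _ he

theorem monomial_one_eq_prod_X_pow (d : σ →₀ ℕ) :
    monomial d (1 : R) = ∏ i ∈ d.support, X i ^ d i := by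
  conv_lhs => rw [← d.sum_single, Finsupp.sum, ← Finset.prod_const_one (s := d.support)]
  rw [← prod_monomial]
  simp only [X_pow_eq]

end MvPowerSeries

theorem Ideal.Quotient.span_range_mk_eq_top {K A ι : Type*} [CommRing K] [CommRing A]
    [Algebra K A] {I : Ideal A} {b : ι → A}
    (h : Submodule.span K (Set.range b) ⊔ I.restrictScalars K = ⊤) :
    Submodule.span K (Set.range fun i => Ideal.Quotient.mk I (b i)) = ⊤ := by
  let π := (Ideal.Quotient.mkₐ K I).toLinearMap
  have hI : (I.restrictScalars K).map π = ⊥ :=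
    eq_bot_iff.2 fun _ ⟨x, hx, hπx⟩ => hπx ▸ Ideal.Quotient.eq_zero_iff_mem.2 hx
  calc Submodule.span K (Set.range fun i => Ideal.Quotient.mk I (b i))
      = (Submodule.span K (Set.range b) ⊔ I.restrictScalars K).map π := by
        rw [Submodule.map_sup, hI, sup_bot_eq, Submodule.map_span, ← Set.range_comp]; rfl
    _ = ⊤ := by
        rw [h, Submodule.map_top, LinearMap.range_eq_top]
        exact Ideal.Quotient.mkₐ_surjective K I

theorem Ideal.finrank_le_finrank_quotient {K A W : Type*} [Field K] [CommRing A] [Algebra K A]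
    [AddCommGroup W] [Module K W] {I : Ideal A} [Module.Finite K (A ⧸ I)] (Φ : A →ₗ[K] W)
    (hΦ : Function.Surjective Φ) (hI : ∀ x ∈ I, Φ x = 0) :
    Module.finrank K W ≤ Module.finrank K (A ⧸ I) := by
  let Ψ := (I.restrictScalars K).liftQ Φ hI ∘ₗ
    (Submodule.Quotient.restrictScalarsEquiv K I).symm.toLinearMap
  refine LinearMap.finrank_le_finrank_of_surjective (f := Ψ) fun w => ?_
  obtain ⟨x, rfl⟩ := hΦ w
  exact ⟨Ideal.Quotient.mk I x, rfl⟩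

theorem Finsupp.forall_le_one_or_exists_or_eq_single {σ : Type*} (d : σ →₀ ℕ) :
    (∀ i, d i ≤ 1) ∨ (∃ i j, i ≠ j ∧ single i 2 + single j 1 ≤ d) ∨
      ∃ i, 2 ≤ d i ∧ d = single i (d i) := by
  classical
  by_cases hsq : ∀ i, d i ≤ 1
  · exact Or.inl hsq
  push Not at hsq
  obtain ⟨i, hi⟩ := hsq
  by_cases hmix : ∃ j, j ≠ i ∧ d j ≠ 0
  · obtain ⟨j, hji, hj⟩ := hmix
    refine Or.inr (Or.inl ⟨i, j, hji.symm, fun k => ?_⟩)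
    by_cases hk : k = i
    · subst hk; simp [hji.symm]; omega
    · by_cases hkj : k = j
      · subst hkj; simp [hk]; omega
      · simp [Ne.symm hk, Ne.symm hkj]
  · push Not at hmix
    refine Or.inr (Or.inr ⟨i, by omega, Finsupp.ext fun k => ?_⟩)
    by_cases hk : k = i
    · subst hk; simp
    · simp [Ne.symm hk, hmix k hk]

namespace FermatCubic

local notation "𝒪" => MvPowerSeries (Fin 3) ℂ
local notation "𝕏" => (MvPowerSeries.X : Fin 3 → 𝒪)
local notation "𝕔" => (MvPowerSeries.C : ℂ →+* 𝒪)

variable {t : ℂ}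

theorem pderiv_fermatCubicFamily {i j k : Fin 3} (hij : i ≠ j) (hik : i ≠ k) (hjk : j ≠ k) :
    pderiv i (fermatCubicFamily t) = 3 * X i ^ 2 - C t * (X j * X k) := by
  fin_cases i <;> fin_cases j <;> fin_cases k <;> simp_all [fermatCubicFamily, pderiv_X] <;>
    ring_nf <;> simp

theorem coe_pderiv_fermatCubicFamily {i j k : Fin 3} (hij : i ≠ j) (hik : i ≠ k) (hjk : j ≠ k) :
    ((pderiv i (fermatCubicFamily t) : MvPolynomial (Fin 3) ℂ) : 𝒪) =
      3 * 𝕏 i ^ 2 - 𝕔 t * (𝕏 j * 𝕏 k) :=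
  (congrArg coeToMvPowerSeries.ringHom (pderiv_fermatCubicFamily hij hik hjk)).trans (by
    rw [map_sub, map_mul, map_mul, map_mul, map_pow, map_ofNat]; simp)

theorem three_mul_X_sq_sub_mem_milnorIdeal {i j k : Fin 3} (hij : i ≠ j) (hik : i ≠ k)
    (hjk : j ≠ k) :
    3 * 𝕏 i ^ 2 - 𝕔 t * (𝕏 j * 𝕏 k) ∈ milnorIdeal (fermatCubicFamily t) :=
  Ideal.subset_span ⟨i, coe_pderiv_fermatCubicFamily hij hik hjk⟩

theorem exists_ne_and_ne (i j : Fin 3) : ∃ k, i ≠ k ∧ j ≠ k := by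
  fin_cases i <;> fin_cases j <;> decide

theorem X_sq_mul_X_mem_milnorIdeal (ht : t ^ 3 ≠ 27) {i j : Fin 3} (hij : i ≠ j) :
    𝕏 i ^ 2 * 𝕏 j ∈ milnorIdeal (fermatCubicFamily t) := by
  obtain ⟨k, hik, hjk⟩ := exists_ne_and_ne i j
  have hunit : IsUnit (𝕔 (27 - t ^ 3)) := (isUnit_iff_ne_zero.2 (sub_ne_zero.2 ht.symm)).map _
  refine (Ideal.unit_mul_mem_iff_mem _ hunit).1 ?_
  have key : 𝕔 (27 - t ^ 3) * (𝕏 i ^ 2 * 𝕏 j) =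
      9 * 𝕏 j * (3 * 𝕏 i ^ 2 - 𝕔 t * (𝕏 j * 𝕏 k))
        + 3 * 𝕔 t * 𝕏 k * (3 * 𝕏 j ^ 2 - 𝕔 t * (𝕏 i * 𝕏 k))
        + 𝕔 t ^ 2 * 𝕏 i * (3 * 𝕏 k ^ 2 - 𝕔 t * (𝕏 i * 𝕏 j)) := by
    rw [map_sub, map_pow, map_ofNat]; ring
  rw [key]
  exact add_mem (add_mem
    (Ideal.mul_mem_left _ _ (three_mul_X_sq_sub_mem_milnorIdeal hij hik hjk))
    (Ideal.mul_mem_left _ _ (three_mul_X_sq_sub_mem_milnorIdeal hij.symm hjk hik)))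
    (Ideal.mul_mem_left _ _ (three_mul_X_sq_sub_mem_milnorIdeal hik.symm hjk.symm hij))

theorem X_pow_four_mem_milnorIdeal (ht : t ^ 3 ≠ 27) (i : Fin 3) :
    𝕏 i ^ 4 ∈ milnorIdeal (fermatCubicFamily t) := by
  obtain ⟨j, hji⟩ := exists_ne i
  obtain ⟨k, hik, hjk⟩ := exists_ne_and_ne i j
  have hunit : IsUnit (3 : 𝒪) := by
    simpa only [map_ofNat] using (isUnit_iff_ne_zero.2 (three_ne_zero : (3 : ℂ) ≠ 0)).map 𝕔
  refine (Ideal.unit_mul_mem_iff_mem _ hunit).1 ?_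
  have key : 3 * 𝕏 i ^ 4 = 𝕏 i ^ 2 * (3 * 𝕏 i ^ 2 - 𝕔 t * (𝕏 j * 𝕏 k))
      + 𝕔 t * 𝕏 k * (𝕏 i ^ 2 * 𝕏 j) := by ring
  rw [key]
  exact add_mem (Ideal.mul_mem_left _ _ (three_mul_X_sq_sub_mem_milnorIdeal hji.symm hik hjk))
    (Ideal.mul_mem_left _ _ (X_sq_mul_X_mem_milnorIdeal ht hji.symm))

theorem monomial_mem_milnorIdeal_of_le (ht : t ^ 3 ≠ 27) {i j : Fin 3} (hij : i ≠ j)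
    {d : Fin 3 →₀ ℕ} (hd : Finsupp.single i 2 + Finsupp.single j 1 ≤ d) :
    MvPowerSeries.monomial d 1 ∈ milnorIdeal (fermatCubicFamily t) := by
  refine MvPowerSeries.monomial_one_mem_of_le hd ?_
  rw [← mul_one (1 : ℂ), ← MvPowerSeries.monomial_mul_monomial, ← MvPowerSeries.X_pow_eq,
    ← MvPowerSeries.X_def]
  exact X_sq_mul_X_mem_milnorIdeal ht hij

theorem monomial_mem_milnorIdeal_of_degree_eq_four (ht : t ^ 3 ≠ 27) {d : Fin 3 →₀ ℕ}
    (hd : d.degree = 4) : MvPowerSeries.monomial d 1 ∈ milnorIdeal (fermatCubicFamily t) := by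
  rcases d.forall_le_one_or_exists_or_eq_single with hsq | ⟨i, j, hij, hle⟩ | ⟨i, -, hdi⟩
  · rw [Finsupp.degree_eq_sum, Fin.sum_univ_three] at hd
    have := hsq 0; have := hsq 1; have := hsq 2
    omega
  · exact monomial_mem_milnorIdeal_of_le ht hij hle
  · rw [hdi, Finsupp.degree_single] at hd
    rw [hdi, hd, ← MvPowerSeries.X_pow_eq]
    exact X_pow_four_mem_milnorIdeal ht i

noncomputable def squarefreeSupMilnor (t : ℂ) : Submodule ℂ 𝒪 :=
  Submodule.span ℂ (Set.range fun s : Finset (Fin 3) => ∏ i ∈ s, 𝕏 i) ⊔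
    (milnorIdeal (fermatCubicFamily t)).restrictScalars ℂ

theorem prod_X_mem_squarefreeSupMilnor (s : Finset (Fin 3)) :
    ∏ i ∈ s, 𝕏 i ∈ squarefreeSupMilnor t :=
  Submodule.mem_sup_left (Submodule.subset_span ⟨s, rfl⟩)

theorem mem_squarefreeSupMilnor_of_mem_milnorIdeal {p : 𝒪}
    (hp : p ∈ milnorIdeal (fermatCubicFamily t)) : p ∈ squarefreeSupMilnor t :=
  Submodule.mem_sup_right hp

theorem X_pow_mem_squarefreeSupMilnor (i : Fin 3) {n : ℕ} (hn : n < 4) :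
    𝕏 i ^ n ∈ squarefreeSupMilnor t := by
  obtain ⟨j, hji⟩ := exists_ne i
  obtain ⟨k, hik, hjk⟩ := exists_ne_and_ne i j
  have hgen := three_mul_X_sq_sub_mem_milnorIdeal (t := t) hji.symm hik hjk
  have hijk : i ∉ ({j, k} : Finset (Fin 3)) := by simp [hji.symm, hik]
  interval_cases n
  · simpa using prod_X_mem_squarefreeSupMilnor (t := t) ∅
  · simpa using prod_X_mem_squarefreeSupMilnor (t := t) {i}
  · refine (Submodule.smul_mem_iff _ (three_ne_zero (α := ℂ))).1 ?_
    have key : (3 : ℂ) • 𝕏 i ^ 2 =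
        (3 * 𝕏 i ^ 2 - 𝕔 t * (𝕏 j * 𝕏 k)) + t • ∏ l ∈ {j, k}, 𝕏 l := by
      rw [Finset.prod_pair hjk, MvPowerSeries.smul_eq_C_mul, MvPowerSeries.smul_eq_C_mul,
        map_ofNat]
      ring
    rw [key]
    exact add_mem (mem_squarefreeSupMilnor_of_mem_milnorIdeal hgen)
      (Submodule.smul_mem _ _ (prod_X_mem_squarefreeSupMilnor _))
  · refine (Submodule.smul_mem_iff _ (three_ne_zero (α := ℂ))).1 ?_
    have key : (3 : ℂ) • 𝕏 i ^ 3 =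
        𝕏 i * (3 * 𝕏 i ^ 2 - 𝕔 t * (𝕏 j * 𝕏 k)) + t • ∏ l ∈ {i, j, k}, 𝕏 l := by
      rw [Finset.prod_insert hijk, Finset.prod_pair hjk, MvPowerSeries.smul_eq_C_mul,
        MvPowerSeries.smul_eq_C_mul, map_ofNat]
      ring
    rw [key]
    exact add_mem (mem_squarefreeSupMilnor_of_mem_milnorIdeal (Ideal.mul_mem_left _ _ hgen))
      (Submodule.smul_mem _ _ (prod_X_mem_squarefreeSupMilnor _))

theorem monomial_mem_squarefreeSupMilnor (ht : t ^ 3 ≠ 27) {d : Fin 3 →₀ ℕ} (hd : d.degree < 4) :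
    MvPowerSeries.monomial d 1 ∈ squarefreeSupMilnor t := by
  rcases d.forall_le_one_or_exists_or_eq_single with hsq | ⟨i, j, hij, hle⟩ | ⟨i, -, hdi⟩
  · have hprod : ∏ i ∈ d.support, 𝕏 i ^ d i = ∏ i ∈ d.support, 𝕏 i :=
      Finset.prod_congr rfl fun i hi => by
        rw [show d i = 1 by have := hsq i; have := Finsupp.mem_support_iff.1 hi; omega, pow_one]
    rw [MvPowerSeries.monomial_one_eq_prod_X_pow, hprod]
    exact prod_X_mem_squarefreeSupMilnor d.support
  · exact mem_squarefreeSupMilnor_of_mem_milnorIdeal (monomial_mem_milnorIdeal_of_le ht hij hle)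
  · rw [hdi, Finsupp.degree_single] at hd
    rw [hdi, ← MvPowerSeries.X_pow_eq]
    exact X_pow_mem_squarefreeSupMilnor i hd

theorem squarefreeSupMilnor_eq_top (ht : t ^ 3 ≠ 27) : squarefreeSupMilnor t = ⊤ :=
  MvPowerSeries.eq_top_of_monomial_mem _ 4 (fun _ hd => monomial_mem_squarefreeSupMilnor ht hd)
    fun _ hd φ => mem_squarefreeSupMilnor_of_mem_milnorIdeal
      (Ideal.mul_mem_right φ _ (monomial_mem_milnorIdeal_of_degree_eq_four ht hd))

noncomputable def exponent (a b c : ℕ) : Fin 3 →₀ ℕ :=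
  Finsupp.single 0 a + Finsupp.single 1 b + Finsupp.single 2 c

@[simp] theorem exponent_apply_zero (a b c : ℕ) : exponent a b c 0 = a := by simp [exponent]
@[simp] theorem exponent_apply_one (a b c : ℕ) : exponent a b c 1 = b := by simp [exponent]
@[simp] theorem exponent_apply_two (a b c : ℕ) : exponent a b c 2 = c := by simp [exponent]

@[simp] theorem exponent_le_exponent {a b c a' b' c' : ℕ} :
    exponent a b c ≤ exponent a' b' c' ↔ a ≤ a' ∧ b ≤ b' ∧ c ≤ c' := by
  simp [Finsupp.le_def, Fin.forall_fin_succ]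

@[simp] theorem exponent_sub_exponent (a b c a' b' c' : ℕ) :
    exponent a b c - exponent a' b' c' = exponent (a - a') (b - b') (c - c') := by
  ext i; fin_cases i <;> simp

@[simp] theorem exponent_inj {a b c a' b' c' : ℕ} :
    exponent a b c = exponent a' b' c' ↔ a = a' ∧ b = b' ∧ c = c' := by
  simp [Finsupp.ext_iff, Fin.forall_fin_succ]

theorem monomial_exponent (a b c : ℕ) (r : ℂ) :
    MvPowerSeries.monomial (exponent a b c) r = 𝕔 r * 𝕏 0 ^ a * 𝕏 1 ^ b * 𝕏 2 ^ c := by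
  simp only [exponent, MvPowerSeries.X_pow_eq, ← MvPowerSeries.monomial_zero_eq_C_apply,
    MvPowerSeries.monomial_mul_monomial, zero_add, mul_one]

/-- The contractions of `xyz + (t/3)(x³ + y³ + z³)` by the eight squarefree monomials: these
span the annihilator of the Milnor ideal (its Macaulay inverse system). -/
noncomputable def dualFunctional (t : ℂ) : Fin 8 → (𝒪 →ₗ[ℂ] ℂ) :=
  ![MvPowerSeries.coeff (exponent 0 0 0),
    MvPowerSeries.coeff (exponent 1 0 0),
    MvPowerSeries.coeff (exponent 0 1 0),
    MvPowerSeries.coeff (exponent 0 0 1),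
    MvPowerSeries.coeff (exponent 1 1 0) + (t / 3) • MvPowerSeries.coeff (exponent 0 0 2),
    MvPowerSeries.coeff (exponent 0 1 1) + (t / 3) • MvPowerSeries.coeff (exponent 2 0 0),
    MvPowerSeries.coeff (exponent 1 0 1) + (t / 3) • MvPowerSeries.coeff (exponent 0 2 0),
    MvPowerSeries.coeff (exponent 1 1 1) + (t / 3) • (MvPowerSeries.coeff (exponent 3 0 0) +
      MvPowerSeries.coeff (exponent 0 3 0) + MvPowerSeries.coeff (exponent 0 0 3))]

noncomputable def squarefreeMonomial : Fin 8 → 𝒪 :=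
  ![MvPowerSeries.monomial (exponent 0 0 0) 1, MvPowerSeries.monomial (exponent 1 0 0) 1,
    MvPowerSeries.monomial (exponent 0 1 0) 1, MvPowerSeries.monomial (exponent 0 0 1) 1,
    MvPowerSeries.monomial (exponent 1 1 0) 1, MvPowerSeries.monomial (exponent 0 1 1) 1,
    MvPowerSeries.monomial (exponent 1 0 1) 1, MvPowerSeries.monomial (exponent 1 1 1) 1]

theorem dualFunctional_squarefreeMonomial (j k : Fin 8) :
    dualFunctional t j (squarefreeMonomial k) = if j = k then 1 else 0 := by
  fin_cases j <;> fin_cases k <;>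
    simp [dualFunctional, squarefreeMonomial, MvPowerSeries.coeff_monomial]

theorem coe_pderiv_fermatCubicFamily_eq_monomial :
    ((pderiv 0 (fermatCubicFamily t) : MvPolynomial (Fin 3) ℂ) : 𝒪) =
        MvPowerSeries.monomial (exponent 2 0 0) 3 - MvPowerSeries.monomial (exponent 0 1 1) t ∧
      ((pderiv 1 (fermatCubicFamily t) : MvPolynomial (Fin 3) ℂ) : 𝒪) =
        MvPowerSeries.monomial (exponent 0 2 0) 3 - MvPowerSeries.monomial (exponent 1 0 1) t ∧
      ((pderiv 2 (fermatCubicFamily t) : MvPolynomial (Fin 3) ℂ) : 𝒪) =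
        MvPowerSeries.monomial (exponent 0 0 2) 3 - MvPowerSeries.monomial (exponent 1 1 0) t := by
  refine ⟨?_, ?_, ?_⟩
  · rw [coe_pderiv_fermatCubicFamily (j := 1) (k := 2) (by decide) (by decide) (by decide)]
    rw [monomial_exponent, monomial_exponent, map_ofNat]; ring
  · rw [coe_pderiv_fermatCubicFamily (j := 0) (k := 2) (by decide) (by decide) (by decide)]
    rw [monomial_exponent, monomial_exponent, map_ofNat]; ring
  · rw [coe_pderiv_fermatCubicFamily (j := 0) (k := 1) (by decide) (by decide) (by decide)]
    rw [monomial_exponent, monomial_exponent, map_ofNat]; ring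

theorem dualFunctional_mul_pderiv (j : Fin 8) (i : Fin 3) (r : 𝒪) :
    dualFunctional t j (r * (pderiv i (fermatCubicFamily t) : MvPolynomial (Fin 3) ℂ)) = 0 := by
  obtain ⟨h0, h1, h2⟩ := coe_pderiv_fermatCubicFamily_eq_monomial (t := t)
  fin_cases i <;> fin_cases j <;>
    simp [dualFunctional, h0, h1, h2, mul_sub, MvPowerSeries.coeff_mul_monomial] <;> ring

theorem dualFunctional_eq_zero_of_mem (j : Fin 8) {p : 𝒪}
    (hp : p ∈ milnorIdeal (fermatCubicFamily t)) : dualFunctional t j p = 0 := by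
  obtain ⟨c, rfl⟩ := (Submodule.mem_span_range_iff_exists_fun _).1 hp
  simp only [map_sum, smul_eq_mul, dualFunctional_mul_pderiv, Finset.sum_const_zero]

theorem milnorNumber_fermatCubicFamily (ht : t ^ 3 ≠ 27) :
    milnorNumber (fermatCubicFamily t) = 8 := by
  have hspan := Ideal.Quotient.span_range_mk_eq_top (squarefreeSupMilnor_eq_top ht)
  have : Module.Finite ℂ (𝒪 ⧸ milnorIdeal (fermatCubicFamily t)) :=
    ⟨hspan ▸ Submodule.fg_span (Set.finite_range _)⟩
  refine le_antisymm ?_ ?_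
  · rw [milnorNumber, ← finrank_top, ← hspan]
    exact (finrank_range_le_card _).trans (by simp)
  · have hsurj : Function.Surjective (LinearMap.pi (dualFunctional t)) := fun v =>
      ⟨∑ k, v k • squarefreeMonomial k, funext fun j => by simp [dualFunctional_squarefreeMonomial]⟩
    simpa [milnorNumber] using Ideal.finrank_le_finrank_quotient _ hsurj fun x hx =>
      funext fun j => dualFunctional_eq_zero_of_mem j hx

end FermatCubic

/-- The family `x³ + y³ + z³ − t·xyz`, `t³ ≠ 27`, is a μ-constant family. -/
theorem fermatCubicFamily_mu_constant (t s : ℂ) (ht : t ^ 3 ≠ 27) (hs : s ^ 3 ≠ 27) :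
    milnorNumber (fermatCubicFamily t) = milnorNumber (fermatCubicFamily s) := by
  rw [FermatCubic.milnorNumber_fermatCubicFamily ht, FermatCubic.milnorNumber_fermatCubicFamily hs]
end
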